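/- arXiv:2009.06106 — 3 statements merged into one kernel-verified Lean document; each statement's English description precedes it below -/
import Mathlib

section
/- Let C be any collection of pairwise distinct linear forms over t variables y₀,...,y_{t-1} with coefficients in {0,1,...,n-1}. If r₀,...,r_{t-1} are chosen uniformly and independently from {1,...,n²·t}, then with probability at least 1/2 there is a unique linear form in C achieving the minimum value at y = r. -/
open Finset

attribute [local instance] Classical.propDecidable

/-- The value of the linear form with coefficients `f` at the point `r`. -/
def formValue {n t : ℕ} (f : Fin t → Fin n) (r : Fin t → ℕ) : ℕ :=
  ∑ j, (f j : ℕ) * r j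

lemma formValue_update {n t : ℕ} (f : Fin t → Fin n) (s : Fin t → ℕ) (j : Fin t) (v : ℕ) :
    formValue f (Function.update s j v) = (f j : ℕ) * v + formValue f (Function.update s j 0) := by
  have h : ∀ w : ℕ, formValue f (Function.update s j w)
      = (f j : ℕ) * w + ∑ i ∈ univ.erase j, (f i : ℕ) * s i := by
    intro w
    unfold formValue
    rw [← Finset.add_sum_erase _ _ (mem_univ j)]
    simp only [Function.update_self]
    congr 1
    refine Finset.sum_congr rfl fun i hi => ?_
    rw [Function.update_of_ne (Finset.ne_of_mem_erase hi)]
  rw [h, h, mul_zero, zero_add]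

lemma pair_card_le (n : ℕ) :
    2 * ((univ.filter (fun p : Fin n × Fin n => p.1 < p.2)).card) ≤ n * n := by
  set P := univ.filter (fun p : Fin n × Fin n => p.1 < p.2) with hP
  set Q := univ.filter (fun p : Fin n × Fin n => p.2 < p.1) with hQ
  have hcard : P.card = Q.card := by
    apply Finset.card_bij (fun p _ => (p.2, p.1))
    · intro p hp
      simp only [hP, hQ, mem_filter, mem_univ, true_and] at hp ⊢
      exact hp
    · intro p _ q _ h
      have h1 : p.2 = q.2 := congrArg Prod.fst h
      have h2 : p.1 = q.1 := congrArg Prod.snd h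
      exact Prod.ext h2 h1
    · intro p hp
      refine ⟨(p.2, p.1), ?_, rfl⟩
      simp only [hP, hQ, mem_filter, mem_univ, true_and] at hp ⊢
      exact hp
  have hdisj : Disjoint P Q := by
    rw [Finset.disjoint_left]
    intro p hp hq
    simp only [hP, hQ, mem_filter, mem_univ, true_and] at hp hq
    exact absurd hq (lt_asymm hp)
  have hunion : (P ∪ Q).card ≤ n * n := by
    calc (P ∪ Q).card ≤ (univ : Finset (Fin n × Fin n)).card := Finset.card_le_card (subset_univ _)
    _ = n * n := by simp
  rw [Finset.card_union_of_disjoint hdisj] at hunion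
  omega

/-- If `C` is a nonempty collection of pairwise distinct linear forms over `t` variables
with coefficients in `{0,…,n-1}`, and `r₀,…,r_{t-1}` are chosen uniformly and
independently from `{1,…,n²·t}`, then with probability at least `1/2` there is a
unique form in `C` attaining the minimum value at `y = r`. -/
theorem isolation_unique_min (n t : ℕ) (hn : 0 < n) (ht : 0 < t)
    (C : Finset (Fin t → Fin n)) (hC : C.Nonempty) :
    (Fintype.piFinset (fun _ : Fin t => Finset.Icc 1 (n ^ 2 * t))).card ≤
      2 * ((Fintype.piFinset (fun _ : Fin t => Finset.Icc 1 (n ^ 2 * t))).filter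
        (fun r => ∃! f, f ∈ C ∧ ∀ g ∈ C, formValue f r ≤ formValue g r)).card := by
  set N := n ^ 2 * t with hNdef
  set S := Fintype.piFinset (fun _ : Fin t => Finset.Icc 1 N) with hSdef
  set K := (univ.filter (fun p : Fin n × Fin n => p.1 < p.2)).card with hKdef
  set A : Fin t → Finset (Fin t → ℕ) := fun j => S.filter
      (fun r => ∃ f g, (f ∈ C ∧ ∀ h ∈ C, formValue f r ≤ formValue h r)
        ∧ (g ∈ C ∧ ∀ h ∈ C, formValue g r ≤ formValue h r) ∧ f j ≠ g j) with hAdef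
  -- cardinality of S
  have hcardS : S.card = N ^ t := by
    rw [hSdef, Fintype.card_piFinset_const, Nat.card_Icc]
    simp
  -- bad set is covered by the A j
  have hBsub : S.filter (fun r => ¬ ∃! f, f ∈ C ∧ ∀ g ∈ C, formValue f r ≤ formValue g r)
      ⊆ univ.biUnion A := by
    intro r hr
    rw [mem_filter] at hr
    obtain ⟨hrS, hbad⟩ := hr
    obtain ⟨f₀, hf₀C, hf₀min⟩ := C.exists_min_image (fun f => formValue f r) hC
    have hex : ∃ g, (g ∈ C ∧ ∀ h ∈ C, formValue g r ≤ formValue h r) ∧ g ≠ f₀ := by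
      by_contra h
      push_neg at h
      exact hbad ⟨f₀, ⟨hf₀C, hf₀min⟩, fun y hy => h y hy⟩
    obtain ⟨g, hg, hgne⟩ := hex
    have hj : ∃ j, g j ≠ f₀ j := by
      by_contra h
      push_neg at h
      exact hgne (funext h)
    obtain ⟨j, hj⟩ := hj
    refine mem_biUnion.mpr ⟨j, mem_univ j, ?_⟩
    rw [hAdef]
    exact mem_filter.mpr ⟨hrS, g, f₀, hg, ⟨hf₀C, hf₀min⟩, hj⟩
  -- bound on each A j
  have hAj : ∀ j, (A j).card ≤ K * N ^ (t - 1) := by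
    intro j
    have hfib : ∀ s ∈ (A j).image (fun r => Function.update r j 0),
        ((A j).filter (fun r => Function.update r j 0 = s)).card ≤ K := by
      intro s _
      -- injection from the fiber into pairs (c, c') with c < c'
      set ψ : (Fin t → ℕ) → Fin n × Fin n := fun r =>
        if h : ∃ p : Fin n × Fin n, p.1 < p.2 ∧ ∃ f g,
            (f ∈ C ∧ ∀ h ∈ C, formValue f r ≤ formValue h r)
            ∧ (g ∈ C ∧ ∀ h ∈ C, formValue g r ≤ formValue h r)
            ∧ f j = p.1 ∧ g j = p.2
          then h.choose else (⟨0, hn⟩, ⟨0, hn⟩) with hψdef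
      have hex : ∀ r ∈ (A j).filter (fun r => Function.update r j 0 = s),
          ∃ p : Fin n × Fin n, p.1 < p.2 ∧ ∃ f g,
            (f ∈ C ∧ ∀ h ∈ C, formValue f r ≤ formValue h r)
            ∧ (g ∈ C ∧ ∀ h ∈ C, formValue g r ≤ formValue h r)
            ∧ f j = p.1 ∧ g j = p.2 := by
        intro r hr
        rw [mem_filter] at hr
        have hrA := hr.1
        rw [hAdef, mem_filter] at hrA
        obtain ⟨_, f, g, hf, hg, hfg⟩ := hrA
        rcases lt_or_gt_of_ne hfg with h | h
        · exact ⟨(f j, g j), h, f, g, hf, hg, rfl, rfl⟩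
        · exact ⟨(g j, f j), h, g, f, hg, hf, rfl, rfl⟩
      apply Finset.card_le_card_of_injOn ψ
      · intro r hr
        have h := hex r hr
        rw [hψdef]
        simp only [dif_pos h]
        exact mem_filter.mpr ⟨mem_univ _, h.choose_spec.1⟩
      · intro r hr r' hr' hψeq
        have h := hex r hr
        have h' := hex r' hr'
        have hspec := h.choose_spec
        have hspec' := h'.choose_spec
        have hψr : ψ r = h.choose := by rw [hψdef]; simp only [dif_pos h]
        have hψr' : ψ r' = h'.choose := by rw [hψdef]; simp only [dif_pos h']
        have hpeq : h.choose = h'.choose := by rw [← hψr, ← hψr', hψeq]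
        obtain ⟨hlt, f, g, hf, hg, hfj, hgj⟩ := hspec
        rw [← hpeq] at hspec'
        obtain ⟨_, f', g', hf', hg', hfj', hgj'⟩ := hspec'
        -- r and r' agree off j
        rw [mem_coe, mem_filter] at hr hr'
        have hrs : r = Function.update s j (r j) := by
          funext i
          by_cases hi : i = j
          · subst hi; simp
          · rw [Function.update_of_ne hi, ← hr.2, Function.update_of_ne hi]
        have hr's : r' = Function.update s j (r' j) := by
          funext i
          by_cases hi : i = j
          · subst hi; simp
          · rw [Function.update_of_ne hi, ← hr'.2, Function.update_of_ne hi]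
        set v := r j with hv
        set v' := r' j with hv'
        set c : ℕ := (h.choose.1 : ℕ) with hc
        set c' : ℕ := (h.choose.2 : ℕ) with hc'
        have hcc' : c < c' := by exact_mod_cast hlt
        set Ff := formValue f (Function.update s j 0) with hFf
        set Fg := formValue g (Function.update s j 0) with hFg
        set Ff' := formValue f' (Function.update s j 0) with hFf'
        set Fg' := formValue g' (Function.update s j 0) with hFg'
        have hvalf : formValue f r = c * v + Ff := by
          rw [hrs, formValue_update, hfj]
        have hvalg : formValue g r = c' * v + Fg := by
          rw [hrs, formValue_update, hgj]
        have hvalf' : formValue f' r' = c * v' + Ff' := by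
          rw [hr's, formValue_update, hfj']
        have hvalg' : formValue g' r' = c' * v' + Fg' := by
          rw [hr's, formValue_update, hgj']
        have hvalf'_at_r : formValue f' r = c * v + Ff' := by
          rw [hrs, formValue_update, hfj']
        have hvalg'_at_r : formValue g' r = c' * v + Fg' := by
          rw [hrs, formValue_update, hgj']
        have hvalf_at_r' : formValue f r' = c * v' + Ff := by
          rw [hr's, formValue_update, hfj]
        have hvalg_at_r' : formValue g r' = c' * v' + Fg := by
          rw [hr's, formValue_update, hgj]
        -- Ff = Ff'
        have hFfeq : Ff = Ff' := by
          have h1 : formValue f r ≤ formValue f' r := hf.2 f' hf'.1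
          have h2 : formValue f' r' ≤ formValue f r' := hf'.2 f hf.1
          rw [hvalf, hvalf'_at_r] at h1
          rw [hvalf', hvalf_at_r'] at h2
          omega
        have hFgeq : Fg = Fg' := by
          have h1 : formValue g r ≤ formValue g' r := hg.2 g' hg'.1
          have h2 : formValue g' r' ≤ formValue g r' := hg'.2 g hg.1
          rw [hvalg, hvalg'_at_r] at h1
          rw [hvalg', hvalg_at_r'] at h2
          omega
        -- min equality at r and r'
        have heq1 : c * v + Ff = c' * v + Fg := by
          have h1 : formValue f r ≤ formValue g r := hf.2 g hg.1
          have h2 : formValue g r ≤ formValue f r := hg.2 f hf.1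
          rw [hvalf, hvalg] at h1 h2
          omega
        have heq2 : c * v' + Ff = c' * v' + Fg := by
          have h1 : formValue f' r' ≤ formValue g' r' := hf'.2 g' hg'.1
          have h2 : formValue g' r' ≤ formValue f' r' := hg'.2 f' hf'.1
          rw [hvalf', hvalg'] at h1 h2
          rw [hFfeq, hFgeq]
          omega
        -- conclude v = v'
        have hvv' : v = v' := by
          obtain ⟨d, hd⟩ : ∃ d, c' = c + d + 1 := ⟨c' - c - 1, by omega⟩
          have e1 : c * v + Ff = c * v + (d * v + v + Fg) := by
            rw [heq1, hd]; ring
          have e1' : Ff = d * v + v + Fg := Nat.add_left_cancel e1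
          have e2 : c * v' + Ff = c * v' + (d * v' + v' + Fg) := by
            rw [heq2, hd]; ring
          have e2' : Ff = d * v' + v' + Fg := Nat.add_left_cancel e2
          have e3 : d * v + v = d * v' + v' := by
            have := e1'.symm.trans e2'
            exact Nat.add_right_cancel this
          have e4 : (d + 1) * v = (d + 1) * v' := by
            rw [add_mul, add_mul, one_mul, one_mul]; exact e3
          exact Nat.eq_of_mul_eq_mul_left (Nat.succ_pos d) e4
        rw [hrs, hr's, hvv']
    have hle := Finset.card_le_mul_card_image (A j) K hfib
    refine hle.trans ?_
    have him : ((A j).image (fun r => Function.update r j 0)).card ≤ N ^ (t - 1) := by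
      have hsub : (A j).image (fun r => Function.update r j 0) ⊆
          Fintype.piFinset (Function.update (fun _ : Fin t => Finset.Icc 1 N) j {0}) := by
        intro s hs
        rw [mem_image] at hs
        obtain ⟨r, hr, rfl⟩ := hs
        rw [hAdef, mem_filter] at hr
        have hrS := hr.1
        rw [hSdef, Fintype.mem_piFinset] at hrS
        rw [Fintype.mem_piFinset]
        intro i
        by_cases hi : i = j
        · subst hi; simp
        · rw [Function.update_of_ne hi, Function.update_of_ne hi]
          exact hrS i
      refine (Finset.card_le_card hsub).trans ?_
      rw [Fintype.card_piFinset]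
      rw [← Finset.prod_erase_mul _ _ (mem_univ j)]
      simp only [Function.update_self, Finset.card_singleton, mul_one]
      have : ∀ i ∈ univ.erase j, ((Function.update (fun _ : Fin t => Finset.Icc 1 N) j {0}) i).card = N := by
        intro i hi
        rw [Function.update_of_ne (Finset.ne_of_mem_erase hi), Nat.card_Icc]
        omega
      rw [Finset.prod_congr rfl this, Finset.prod_const, Finset.card_erase_of_mem (mem_univ j),
        Finset.card_univ, Fintype.card_fin]
    exact Nat.mul_le_mul_left K him
  -- combine
  have hBcard : (S.filter (fun r => ¬ ∃! f, f ∈ C ∧ ∀ g ∈ C,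
      formValue f r ≤ formValue g r)).card ≤ t * (K * N ^ (t - 1)) := by
    refine (Finset.card_le_card hBsub).trans ?_
    refine Finset.card_biUnion_le.trans ?_
    calc ∑ j : Fin t, (A j).card ≤ ∑ _j : Fin t, K * N ^ (t - 1) :=
          Finset.sum_le_sum fun j _ => hAj j
      _ = t * (K * N ^ (t - 1)) := by
          rw [Finset.sum_const, Finset.card_univ, Fintype.card_fin, smul_eq_mul]
  have hK2 : 2 * K ≤ n * n := pair_card_le n
  have hhalf : 2 * (t * (K * N ^ (t - 1))) ≤ N ^ t := by
    have hNt : N ^ t = N * N ^ (t - 1) := by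
      conv_lhs => rw [show t = 1 + (t - 1) by omega]
      rw [pow_add, pow_one]
    rw [hNt, hNdef]
    have : 2 * (t * (K * (n ^ 2 * t) ^ (t - 1))) = (2 * K) * t * (n ^ 2 * t) ^ (t - 1) := by ring
    rw [this]
    have h1 : (2 * K) * t ≤ n ^ 2 * t := by
      have : 2 * K ≤ n ^ 2 := by rw [sq]; exact hK2
      exact Nat.mul_le_mul_right t this
    exact Nat.mul_le_mul_right _ h1
  have hsplit : (S.filter (fun r => ∃! f, f ∈ C ∧ ∀ g ∈ C, formValue f r ≤ formValue g r)).card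
      + (S.filter (fun r => ¬ ∃! f, f ∈ C ∧ ∀ g ∈ C, formValue f r ≤ formValue g r)).card
      = S.card := Finset.card_filter_add_card_filter_not _
  rw [hcardS] at hsplit
  omega
end

section
/- Let H ∈ ℝ^{d×d} be symmetric positive definite, ε ∈ (0, 1/80), and b, v ∈ ℝ^d with ‖v‖_{H⁻¹} ≤ ε‖b‖_{H⁻¹}. Let y = H⁻¹(b + v). Then there exists a symmetric matrix Δ such that y = (H + Δ)⁻¹ b and (1 + 20ε)⁻¹ H ⪯ H + Δ ⪯ (1 + 20ε) H. -/
open Matrix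

/-- The local norm `‖v‖_M = √(vᵀ M v)`. -/
noncomputable def mnorm {d : ℕ} (M : Matrix (Fin d) (Fin d) ℝ) (v : Fin d → ℝ) : ℝ :=
  Real.sqrt (v ⬝ᵥ M.mulVec v)

/-- Loewner order `A ⪯ B`. -/
def PSDle {d : ℕ} (A B : Matrix (Fin d) (Fin d) ℝ) : Prop := (B - A).PosSemidef

/-!
With `w = H y` and `q = yᵀ H y`, the symmetric rank-two matrix
`Δ = -(v wᵀ + w vᵀ) / q + (vᵀ y) w wᵀ / q²` satisfies `Δ y = -v`, i.e. `(H + Δ) y = b`.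
Cauchy–Schwarz in the dual pair `‖·‖_H`, `‖·‖_{H⁻¹}` bounds each term of `xᵀ Δ x`, giving
`|xᵀ Δ x| ≤ 3 (‖v‖_{H⁻¹} / ‖y‖_H) ‖x‖_H²`. Since `b = H y - v`, the triangle inequality gives
`‖v‖_{H⁻¹} ≤ ε (‖y‖_H + ‖v‖_{H⁻¹})`, so `‖v‖_{H⁻¹} ≤ ε / (1 - ε) ‖y‖_H` and
`|xᵀ Δ x| ≤ 4 ε xᵀ H x`, which is well inside the claimed Loewner bounds.
-/

namespace Matrix

variable {d : ℕ} {A : Matrix (Fin d) (Fin d) ℝ}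

lemma PosSemidef.dotProduct_mulVec_nonneg' (hA : A.PosSemidef) (x : Fin d → ℝ) :
    0 ≤ x ⬝ᵥ A *ᵥ x := by
  simpa using hA.dotProduct_mulVec_nonneg x

lemma IsSymm.dotProduct_mulVec_comm (hA : A.IsSymm) (x z : Fin d → ℝ) :
    x ⬝ᵥ A *ᵥ z = z ⬝ᵥ A *ᵥ x := by
  rw [dotProduct_mulVec, ← mulVec_transpose, hA.eq, dotProduct_comm]

lemma PosSemidef.dotProduct_mulVec_sq_le (hA : A.PosSemidef) (x z : Fin d → ℝ) :
    (x ⬝ᵥ A *ᵥ z) ^ 2 ≤ (x ⬝ᵥ A *ᵥ x) * (z ⬝ᵥ A *ᵥ z) := by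
  have hsymm : A.IsSymm := isHermitian_iff_isSymm.mp hA.isHermitian
  have := (toBilin' A).apply_mul_apply_le_of_forall_zero_le
    (fun x => by simpa only [toBilin'_apply'] using hA.dotProduct_mulVec_nonneg' x) x z
  simpa only [toBilin'_apply', sq, hsymm.dotProduct_mulVec_comm z x] using this

end Matrix

section mnorm

variable {d : ℕ} {A H : Matrix (Fin d) (Fin d) ℝ}

lemma mnorm_nonneg (A : Matrix (Fin d) (Fin d) ℝ) (x : Fin d → ℝ) : 0 ≤ mnorm A x :=
  Real.sqrt_nonneg _

lemma sq_mnorm (hA : A.PosSemidef) (x : Fin d → ℝ) : mnorm A x ^ 2 = x ⬝ᵥ A *ᵥ x :=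
  Real.sq_sqrt (hA.dotProduct_mulVec_nonneg' x)

lemma mnorm_eq_zero (hA : A.PosDef) {x : Fin d → ℝ} : mnorm A x = 0 ↔ x = 0 := by
  refine ⟨fun h => ?_, fun h => by simp [h, mnorm]⟩
  by_contra hx
  have hpos : 0 < x ⬝ᵥ A *ᵥ x := by simpa using hA.dotProduct_mulVec_pos hx
  rw [mnorm, Real.sqrt_eq_zero'] at h
  linarith

lemma abs_dotProduct_mulVec_le (hA : A.PosSemidef) (x z : Fin d → ℝ) :
    |x ⬝ᵥ A *ᵥ z| ≤ mnorm A x * mnorm A z := by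
  rw [mnorm, mnorm, ← Real.sqrt_mul (hA.dotProduct_mulVec_nonneg' x)]
  exact Real.abs_le_sqrt (hA.dotProduct_mulVec_sq_le x z)

lemma mnorm_sub_le (hA : A.PosSemidef) (x z : Fin d → ℝ) :
    mnorm A (x - z) ≤ mnorm A x + mnorm A z := by
  have hsymm : A.IsSymm := isHermitian_iff_isSymm.mp hA.isHermitian
  have hcross := (abs_le.mp (abs_dotProduct_mulVec_le hA x z)).1
  refine Real.sqrt_le_iff.mpr ⟨add_nonneg (mnorm_nonneg A x) (mnorm_nonneg A z), ?_⟩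
  rw [add_sq, sq_mnorm hA, sq_mnorm hA]
  simp only [mulVec_sub, dotProduct_sub, sub_dotProduct, hsymm.dotProduct_mulVec_comm z x]
  linarith

lemma mnorm_inv_mulVec (hH : IsUnit H.det) (x : Fin d → ℝ) :
    mnorm H⁻¹ (H *ᵥ x) = mnorm H x := by
  rw [mnorm, mnorm, mulVec_mulVec, nonsing_inv_mul _ hH, one_mulVec, dotProduct_comm]

lemma abs_dotProduct_le_mnorm_inv_mul_mnorm (hH : H.PosDef) (v x : Fin d → ℝ) :
    |v ⬝ᵥ x| ≤ mnorm H⁻¹ v * mnorm H x := by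
  have hdet : IsUnit H.det := (isUnit_iff_isUnit_det H).mp hH.isUnit
  have := abs_dotProduct_mulVec_le hH.inv.posSemidef v (H *ᵥ x)
  rwa [mulVec_mulVec, nonsing_inv_mul _ hdet, one_mulVec, mnorm_inv_mulVec hdet] at this

lemma mnorm_inv_le_div_mul_mnorm (hH : H.PosDef) {ε : ℝ} (hε₀ : 0 ≤ ε) (hε₁ : ε < 1)
    {b v y : Fin d → ℝ} (hy : H *ᵥ y = b + v) (hv : mnorm H⁻¹ v ≤ ε * mnorm H⁻¹ b) :
    mnorm H⁻¹ v ≤ ε / (1 - ε) * mnorm H y := by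
  have hdet : IsUnit H.det := (isUnit_iff_isUnit_det H).mp hH.isUnit
  have hb : mnorm H⁻¹ b ≤ mnorm H y + mnorm H⁻¹ v := by
    rw [← mnorm_inv_mulVec hdet y, ← add_sub_cancel_right b v, ← hy]
    exact mnorm_sub_le hH.inv.posSemidef _ _
  rw [div_mul_eq_mul_div, le_div_iff₀ (sub_pos.mpr hε₁)]
  nlinarith [mul_le_mul_of_nonneg_left hb hε₀]

end mnorm

lemma abs_neg_inv_mul_add_div_mul_le {a b p s X n c : ℝ} (hs : 0 ≤ s) (hX : 0 ≤ X) (hc : 0 ≤ c)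
    (ha : |a| ≤ n * X) (hb : |b| ≤ s * X) (hp : |p| ≤ n * s) (hn : n ≤ c * s) :
    |-(s ^ 2)⁻¹ * (2 * a * b) + p / (s ^ 2) ^ 2 * b ^ 2| ≤ 3 * c * X ^ 2 := by
  rcases hs.eq_or_lt with rfl | hs
  · simp only [ne_eq, OfNat.ofNat_ne_zero, not_false_eq_true, zero_pow, _root_.inv_zero,
      neg_zero, zero_mul, div_zero, add_zero, abs_zero]
    positivity
  have hn0 : 0 ≤ n := nonneg_of_mul_nonneg_left ((abs_nonneg p).trans hp) hs
  calc |-(s ^ 2)⁻¹ * (2 * a * b) + p / (s ^ 2) ^ 2 * b ^ 2|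
      ≤ 2 * |a| * |b| / s ^ 2 + |p| * |b| ^ 2 / s ^ 4 := by
        refine (abs_add_le _ _).trans_eq ?_
        simp only [abs_mul, abs_div, abs_neg, abs_inv, abs_pow, abs_two, abs_of_pos hs]
        ring
    _ ≤ 2 * (n * X) * (s * X) / s ^ 2 + (n * s) * (s * X) ^ 2 / s ^ 4 := by gcongr
    _ = 3 * n / s * X ^ 2 := by field_simp; ring
    _ ≤ 3 * c * X ^ 2 := by
        gcongr
        rw [div_le_iff₀ hs]
        linarith

section rankTwoCorrection

variable {d : ℕ}

noncomputable def rankTwoCorrection (y w v : Fin d → ℝ) : Matrix (Fin d) (Fin d) ℝ :=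
  (-(y ⬝ᵥ w)⁻¹) • (vecMulVec v w + vecMulVec w v) + ((v ⬝ᵥ y) / (y ⬝ᵥ w) ^ 2) • vecMulVec w w

variable (y w v : Fin d → ℝ)

lemma isSymm_rankTwoCorrection : (rankTwoCorrection y w v).IsSymm := by
  simp only [IsSymm, rankTwoCorrection, transpose_add, transpose_smul, transpose_vecMulVec,
    add_comm (vecMulVec w v)]

-- When `y ⬝ᵥ w = 0` the correction is `0` (as `0⁻¹ = 0`), so only `v = 0` can be matched.
lemma rankTwoCorrection_mulVec_self (h : y ⬝ᵥ w = 0 → v = 0) :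
    rankTwoCorrection y w v *ᵥ y = -v := by
  by_cases hq : y ⬝ᵥ w = 0
  · obtain rfl := h hq
    simp [rankTwoCorrection, hq]
  · ext i
    simp only [rankTwoCorrection, add_mulVec, smul_mulVec, vecMulVec_mulVec, op_smul_eq_smul,
      dotProduct_comm w y, Pi.add_apply, Pi.neg_apply, Pi.smul_apply, smul_eq_mul]
    field_simp
    ring

lemma dotProduct_rankTwoCorrection_mulVec (x : Fin d → ℝ) :
    x ⬝ᵥ rankTwoCorrection y w v *ᵥ x =
      -(y ⬝ᵥ w)⁻¹ * (2 * (v ⬝ᵥ x) * (w ⬝ᵥ x)) + (v ⬝ᵥ y) / (y ⬝ᵥ w) ^ 2 * (w ⬝ᵥ x) ^ 2 := by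
  simp only [rankTwoCorrection, add_mulVec, smul_mulVec, vecMulVec_mulVec, op_smul_eq_smul,
    dotProduct_comm x, add_dotProduct, smul_dotProduct, smul_eq_mul]
  ring

lemma abs_dotProduct_rankTwoCorrection_mulVec_le {H : Matrix (Fin d) (Fin d) ℝ} (hH : H.PosDef)
    {y v : Fin d → ℝ} {c : ℝ} (hc : 0 ≤ c) (hv : mnorm H⁻¹ v ≤ c * mnorm H y)
    (x : Fin d → ℝ) :
    |x ⬝ᵥ rankTwoCorrection y (H *ᵥ y) v *ᵥ x| ≤ 3 * c * (x ⬝ᵥ H *ᵥ x) := by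
  have hdet : IsUnit H.det := (isUnit_iff_isUnit_det H).mp hH.isUnit
  have hCS := abs_dotProduct_le_mnorm_inv_mul_mnorm hH
  rw [dotProduct_rankTwoCorrection_mulVec, ← sq_mnorm hH.posSemidef, ← sq_mnorm hH.posSemidef]
  refine abs_neg_inv_mul_add_div_mul_le (mnorm_nonneg H y) (mnorm_nonneg H x) hc
    (hCS v x) ?_ (hCS v y) hv
  simpa only [mnorm_inv_mulVec hdet] using hCS (H *ᵥ y) x

end rankTwoCorrection

section PSDle

variable {d : ℕ} {H Δ : Matrix (Fin d) (Fin d) ℝ}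

lemma psdle_of_dotProduct_mulVec_le {A B : Matrix (Fin d) (Fin d) ℝ} (hA : A.IsSymm)
    (hB : B.IsSymm) (h : ∀ x, x ⬝ᵥ A *ᵥ x ≤ x ⬝ᵥ B *ᵥ x) : PSDle A B :=
  PosSemidef.of_dotProduct_mulVec_nonneg (isHermitian_iff_isSymm.mpr (hB.sub hA)) fun x => by
    simpa [sub_mulVec] using h x

lemma smul_psdle_add_of_abs_le (hH : H.PosSemidef) (hΔ : Δ.IsSymm) {δ a : ℝ}
    (hbound : ∀ x, |x ⬝ᵥ Δ *ᵥ x| ≤ δ * (x ⬝ᵥ H *ᵥ x)) (ha : a ≤ 1 - δ) :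
    PSDle (a • H) (H + Δ) := by
  have hHsymm : H.IsSymm := isHermitian_iff_isSymm.mp hH.isHermitian
  refine psdle_of_dotProduct_mulVec_le (hHsymm.smul a) (hHsymm.add hΔ) fun x => ?_
  have hX := hH.dotProduct_mulVec_nonneg' x
  have hΔx := (abs_le.mp (hbound x)).1
  simp only [smul_mulVec, add_mulVec, dotProduct_smul, dotProduct_add, smul_eq_mul]
  nlinarith

lemma add_psdle_smul_of_abs_le (hH : H.PosSemidef) (hΔ : Δ.IsSymm) {δ a : ℝ}
    (hbound : ∀ x, |x ⬝ᵥ Δ *ᵥ x| ≤ δ * (x ⬝ᵥ H *ᵥ x)) (ha : 1 + δ ≤ a) :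
    PSDle (H + Δ) (a • H) := by
  have hHsymm : H.IsSymm := isHermitian_iff_isSymm.mp hH.isHermitian
  refine psdle_of_dotProduct_mulVec_le (hHsymm.add hΔ) (hHsymm.smul a) fun x => ?_
  have hX := hH.dotProduct_mulVec_nonneg' x
  have hΔx := (abs_le.mp (hbound x)).2
  simp only [smul_mulVec, add_mulVec, dotProduct_smul, dotProduct_add, smul_eq_mul]
  nlinarith

end PSDle

/-- Perturbed linear system: for symmetric positive definite `H`, `ε ∈ (0,1/80)` and
`‖v‖_{H⁻¹} ≤ ε‖b‖_{H⁻¹}`, the vector `y = H⁻¹(b+v)` equals `(H+Δ)⁻¹b` for some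
symmetric `Δ` with `(1+20ε)⁻¹ H ⪯ H + Δ ⪯ (1+20ε) H`. -/
theorem perturbed_linear_system {d : ℕ} (H : Matrix (Fin d) (Fin d) ℝ)
    (hH : H.PosDef) (ε : ℝ) (hε : 0 < ε) (hε' : ε < 1 / 80)
    (b v : Fin d → ℝ) (hv : mnorm H⁻¹ v ≤ ε * mnorm H⁻¹ b)
    (y : Fin d → ℝ) (hy : y = H⁻¹.mulVec (b + v)) :
    ∃ Δ : Matrix (Fin d) (Fin d) ℝ, Δ.IsSymm ∧ y = (H + Δ)⁻¹.mulVec b ∧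
      PSDle ((1 + 20 * ε)⁻¹ • H) (H + Δ) ∧ PSDle (H + Δ) ((1 + 20 * ε) • H) := by
  have hdet : IsUnit H.det := (isUnit_iff_isUnit_det H).mp hH.isUnit
  have hHy : H *ᵥ y = b + v := by rw [hy, mulVec_mulVec, mul_nonsing_inv _ hdet, one_mulVec]
  set c := ε / (1 - ε)
  have hc : 0 ≤ c := div_nonneg hε.le (by linarith)
  have h3c : 3 * c ≤ 4 * ε := by rw [mul_div_assoc', div_le_iff₀ (by linarith)]; nlinarith
  have hvy := mnorm_inv_le_div_mul_mnorm hH hε.le (by linarith) hHy hv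
  set Δ := rankTwoCorrection y (H *ᵥ y) v
  have hΔ : Δ.IsSymm := isSymm_rankTwoCorrection _ _ _
  have hbound := abs_dotProduct_rankTwoCorrection_mulVec_le hH hc hvy
  have hlow : PSDle ((1 + 20 * ε)⁻¹ • H) (H + Δ) :=
    smul_psdle_add_of_abs_le hH.posSemidef hΔ hbound <| by
      rw [inv_eq_one_div, div_le_iff₀ (by linarith)]; nlinarith
  have hupp : PSDle (H + Δ) ((1 + 20 * ε) • H) :=
    add_psdle_smul_of_abs_le hH.posSemidef hΔ hbound (by linarith)
  have hPD : (H + Δ).PosDef := by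
    simpa using (hH.smul (inv_pos.mpr (by linarith : (0 : ℝ) < 1 + 20 * ε))).add_posSemidef hlow
  have hΔy : (H + Δ) *ᵥ y = b := by
    rw [add_mulVec, rankTwoCorrection_mulVec_self, hHy, add_neg_cancel_right]
    intro hq
    have hy0 : mnorm H y = 0 := by rw [mnorm, hq, Real.sqrt_zero]
    exact (mnorm_eq_zero hH.inv).mp (le_antisymm (by simpa [hy0] using hvy) (mnorm_nonneg _ _))
  refine ⟨Δ, hΔ, ?_, hlow, hupp⟩
  rw [← hΔy, mulVec_mulVec, nonsing_inv_mul _ ((isUnit_iff_isUnit_det _).mp hPD.isUnit),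
    one_mulVec]
end

section
/- Gremban reduction: let A = D + A_neg + A_pos be an SDD matrix where D is its diagonal, A_neg its negative off-diagonal part, and A_pos its positive off-diagonal part, and define the block matrix Â = [[D + A_neg, −A_pos], [−A_pos, D + A_neg]] and b̂ = (b, −b). If (x₁, x₂) solves Â(x₁,x₂) = b̂, then x = (x₁ − x₂)/2 solves Ax = b. -/
open Matrix

theorem diagonal_add_offDiag_min_zero_add_offDiag_max_zero {n α : Type*} [DecidableEq n]
    [AddCommMonoid α] [LinearOrder α] (A : Matrix n n α) :
    diagonal (fun i => A i i) + of (fun i j => if i = j then 0 else min (A i j) 0)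
      + of (fun i j => if i = j then 0 else max (A i j) 0) = A := by
  ext i j
  by_cases h : i = j
  · subst h
    simp
  · simp [h, min_add_max]

theorem add_mulVec_sub_of_fromBlocks_mulVec_eq {n R : Type*} [Fintype n] [CommRing R]
    {M P : Matrix n n R} {x₁ x₂ b : n → R}
    (h : fromBlocks M (-P) (-P) M *ᵥ Sum.elim x₁ x₂ = Sum.elim b (-b)) :
    (M + P) *ᵥ (x₁ - x₂) = b - -b := by
  rw [fromBlocks_mulVec, Sum.elim_eq_iff] at h
  obtain ⟨h₁, h₂⟩ := h
  simp only [Sum.elim_comp_inl, Sum.elim_comp_inr, neg_mulVec] at h₁ h₂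
  rw [add_mulVec, mulVec_sub, mulVec_sub]
  linear_combination h₁ - h₂

theorem gremban_reduction_general {N : ℕ} (A : Matrix (Fin N) (Fin N) ℝ)
    (D Aneg Apos : Matrix (Fin N) (Fin N) ℝ)
    (hD : D = Matrix.diagonal (fun i => A i i))
    (hAneg : Aneg = fun i j => if i = j then 0 else min (A i j) 0)
    (hApos : Apos = fun i j => if i = j then 0 else max (A i j) 0)
    (b : Fin N → ℝ)
    (x₁ x₂ : Fin N → ℝ)
    (hhat : (Matrix.fromBlocks (D + Aneg) (-Apos) (-Apos) (D + Aneg)).mulVec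
        (Sum.elim x₁ x₂) = Sum.elim b (-b)) :
    A.mulVec ((1 / 2 : ℝ) • (x₁ - x₂)) = b := by
  have hsplit : D + Aneg + Apos = A := by
    subst hD hAneg hApos
    exact diagonal_add_offDiag_min_zero_add_offDiag_max_zero A
  rw [mulVec_smul, ← hsplit, add_mulVec_sub_of_fromBlocks_mulVec_eq hhat]
  module

/-- Gremban reduction: let `A` be a symmetric diagonally dominant matrix, written as
`A = D + A_neg + A_pos` with `D` its diagonal, `A_neg` its negative off-diagonal part
and `A_pos` its positive off-diagonal part, and let
`Â = [[D + A_neg, −A_pos], [−A_pos, D + A_neg]]`, `b̂ = (b, −b)`. If `Ax = b` has a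
solution and `Â(x₁,x₂) = b̂`, then `x = (x₁ − x₂)/2` solves `Ax = b`. -/
theorem gremban_reduction {N : ℕ} (A : Matrix (Fin N) (Fin N) ℝ)
    (hsymm : A.IsSymm)
    (hsdd : ∀ i, ∑ j ∈ Finset.univ.erase i, |A i j| ≤ A i i)
    (D Aneg Apos : Matrix (Fin N) (Fin N) ℝ)
    (hD : D = Matrix.diagonal (fun i => A i i))
    (hAneg : Aneg = fun i j => if i = j then 0 else min (A i j) 0)
    (hApos : Apos = fun i j => if i = j then 0 else max (A i j) 0)
    (b : Fin N → ℝ) (hsol : ∃ x₀ : Fin N → ℝ, A.mulVec x₀ = b)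
    (x₁ x₂ : Fin N → ℝ)
    (hhat : (Matrix.fromBlocks (D + Aneg) (-Apos) (-Apos) (D + Aneg)).mulVec
        (Sum.elim x₁ x₂) = Sum.elim b (-b)) :
    A.mulVec ((1 / 2 : ℝ) • (x₁ - x₂)) = b :=
  gremban_reduction_general A D Aneg Apos hD hAneg hApos b x₁ x₂ hhat
end
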